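/- Assume Fix J_i ≠ ∅ for each i. Then ∩_{i=1}^m Fix J_i ≠ ∅ if and only if F_1 = F_2 = ⋯ = F_m ≠ ∅. -/

import Mathlib

/-!
Write `z_k = J_{i+k} ⋯ J_{i+1} x` for the partial compositions. Resolvents are firmly
nonexpansive, so the distance between two such orbits never increases; if both start in `F_i` it
is back to its initial value after `m` steps, hence constant, and the equality case of firm
nonexpansiveness makes the two orbits translates of each other. With a common fixed point `x`,
whose orbit is constant, every point of `F_i` therefore has a constant orbit, i.e. is a common
fixed point.

Conversely, let all `F_i` agree and `p ∈ F_i`, with orbit `z`, and put `g = z_k - p`. As `z_k` lies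
in `F_{i+k} = F_i`, the translation property shows by induction that `p + t g ∈ F_i` with orbit
`z + t g` for every `t ∈ ℕ`. Since `J_j` has a fixed point `b`, i.e. `0 ∈ A_j b`, monotonicity
against the points `z_{j+1} + t g`, for all `t`, gives `⟪g, z_j - z_{j+1}⟫ ≥ 0`. Summing over
`j < k` yields `-‖g‖² ≥ 0`, so the orbit of `p` is constant and `p` is a common fixed point.
-/

open Pointwise InnerProductSpace

variable {X : Type*} [NormedAddCommGroup X] [InnerProductSpace ℝ X]
variable {m : ℕ} [NeZero m]

/-- A set-valued operator `A : X ⇉ X` is monotone. -/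
def SVMonotone (A : X → Set X) : Prop :=
  ∀ ⦃x y u v : X⦄, u ∈ A x → v ∈ A y → 0 ≤ ⟪x - y, u - v⟫_ℝ

/-- A set-valued operator is maximally monotone. -/
def SVMaxMonotone (A : X → Set X) : Prop :=
  SVMonotone A ∧ ∀ x u : X, (∀ y v, v ∈ A y → 0 ≤ ⟪x - y, u - v⟫_ℝ) → u ∈ A x

/-- `J` is the (single-valued, full-domain) resolvent `(Id + A)⁻¹` of `A`. -/
def IsResolventOf (J : X → X) (A : X → Set X) : Prop :=
  ∀ x y : X, J y = x ↔ y - x ∈ A x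

/-- The cyclic composition `J_i ∘ J_{i-1} ∘ ⋯ ∘ J_1 ∘ J_m ∘ ⋯ ∘ J_{i+1}`
(indices understood cyclically in `Fin m`, `0`-based). -/
def cyclicComp (J : Fin m → X → X) (i : Fin m) : X → X :=
  fun x => (List.range m).foldl (fun y (k : ℕ) => J (i + 1 + Fin.ofNat m k) y) x

/-- `F i` : the fixed point set of the cyclic composition ending with `J i`. -/
def cycFix (J : Fin m → X → X) (i : Fin m) : Set X :=
  {x | cyclicComp J i x = x}

/-- `(z_1, …, z_m)` is a cycle: `z_{i} = J_i z_{i-1}` cyclically. -/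
def IsCycle (J : Fin m → X → X) (z : Fin m → X) : Prop :=
  ∀ i : Fin m, z i = J i (z (i - 1))

/-- The circular right-shift operator on `X^m`. -/
def shiftR (z : Fin m → X) : Fin m → X := fun i => z (i - 1)

/-- The coordinatewise resolvent `J_A` on `X^m`. -/
def resProd (J : Fin m → X → X) (z : Fin m → X) : Fin m → X := fun i => J i (z i)

/-- The product operator `A = A_1 × ⋯ × A_m` on `X^m`. -/
def prodOp (A : Fin m → X → Set X) : (Fin m → X) → Set (Fin m → X) :=
  fun z => {u | ∀ i, u i ∈ A i (z i)}

/-- The set of cycles `Z = Fix (J_A ∘ R)`. -/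
def cycleSet (J : Fin m → X → X) : Set (Fin m → X) :=
  {z | resProd J (shiftR z) = z}

namespace IsResolventOf

variable {A : X → Set X} {J : X → X}

theorem norm_sub_sq_le_inner (hA : SVMonotone A) (hJ : IsResolventOf J A) (x y : X) :
    ‖J x - J y‖ ^ 2 ≤ ⟪J x - J y, x - y⟫_ℝ := by
  have h := hA ((hJ (J x) x).mp rfl) ((hJ (J y) y).mp rfl)
  rw [show x - J x - (y - J y) = (x - y) - (J x - J y) by abel, inner_sub_right,
    real_inner_self_eq_norm_sq] at h
  linarith

theorem norm_sub_le (hA : SVMonotone A) (hJ : IsResolventOf J A) (x y : X) :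
    ‖J x - J y‖ ≤ ‖x - y‖ := by
  have h := (hJ.norm_sub_sq_le_inner hA x y).trans (real_inner_le_norm _ _)
  nlinarith [norm_nonneg (J x - J y), norm_nonneg (x - y)]

theorem sub_eq_of_norm_sub_le (hA : SVMonotone A) (hJ : IsResolventOf J A) {x y : X}
    (h : ‖x - y‖ ≤ ‖J x - J y‖) : J x - J y = x - y := by
  have hfirm := hJ.norm_sub_sq_le_inner hA x y
  have heq : ‖J x - J y‖ = ‖x - y‖ := le_antisymm (hJ.norm_sub_le hA x y) h
  have hsq : ‖(x - y) - (J x - J y)‖ ^ 2 ≤ 0 := by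
    rw [heq] at hfirm
    rw [norm_sub_sq_real, real_inner_comm, heq]
    linarith
  have h0 : ‖(x - y) - (J x - J y)‖ = 0 := (pow_eq_zero_iff two_ne_zero).mp
    (le_antisymm hsq (sq_nonneg _))
  exact (sub_eq_zero.mp (norm_eq_zero.mp h0)).symm

end IsResolventOf

theorem nonneg_of_forall_nat_add_mul_nonneg {K : Type*} [Field K] [LinearOrder K]
    [IsStrictOrderedRing K] [Archimedean K] {c r : K} (h : ∀ t : ℕ, 0 ≤ c + t * r) : 0 ≤ r := by
  by_contra! hr
  obtain ⟨t, ht⟩ := exists_nat_gt (c / -r)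
  rw [div_lt_iff₀ (neg_pos.mpr hr)] at ht
  linarith [h t]

theorem IsResolventOf.inner_sub_nonneg_of_map_ray {A : X → Set X} {J : X → X}
    (hA : SVMonotone A) (hJ : IsResolventOf J A) {b : X} (hb : J b = b) {x y g : X}
    (hray : ∀ t : ℕ, J (x + (t : ℝ) • g) = y + (t : ℝ) • g) : 0 ≤ ⟪g, x - y⟫_ℝ := by
  have hb0 : (0 : X) ∈ A b := by simpa using (hJ b b).mp hb
  refine nonneg_of_forall_nat_add_mul_nonneg (c := ⟪y - b, x - y⟫_ℝ) fun t => ?_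
  have hxy : x - y ∈ A (y + (t : ℝ) • g) := by
    simpa using (hJ _ _).mp (hray t)
  have h := hA hxy hb0
  rwa [sub_zero, show y + (t : ℝ) • g - b = (y - b) + (t : ℝ) • g by abel, inner_add_left,
    real_inner_smul_left] at h

open Fin.NatCast

/-- `cycOrbit J i x k = J_{i+k} (⋯ (J_{i+1} x))`, indices in `Fin m`. -/
def cycOrbit {E : Type*} (J : Fin m → E → E) (i : Fin m) (x : E) : ℕ → E
  | 0 => x
  | k + 1 => J (i + 1 + k) (cycOrbit J i x k)

section cycOrbit

variable {E : Type*} {J : Fin m → E → E} {i : Fin m} {x : E}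

theorem cyclicComp_eq_cycOrbit (J : Fin m → E → E) (i : Fin m) (x : E) :
    cyclicComp J i x = cycOrbit J i x m := by
  suffices ∀ n, (List.range n).foldl (fun y (k : ℕ) => J (i + 1 + Fin.ofNat m k) y) x =
      cycOrbit J i x n from this m
  intro n
  induction n with
  | zero => rfl
  | succ n ih => rw [List.range_succ, List.foldl_append, ih, List.foldl_cons, List.foldl_nil,
      Fin.ofNat_eq_cast, cycOrbit]

theorem mem_cycFix_iff : x ∈ cycFix J i ↔ cycOrbit J i x m = x := by
  rw [cycFix, Set.mem_ofPred_eq, cyclicComp_eq_cycOrbit]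

theorem cycOrbit_add (k j : ℕ) :
    cycOrbit J i x (k + j) = cycOrbit J (i + k) (cycOrbit J i x k) j := by
  induction j with
  | zero => rfl
  | succ j ih =>
    rw [← add_assoc, cycOrbit, ih, cycOrbit]
    congr 1
    push_cast
    abel

theorem cycOrbit_mem_cycFix (hx : x ∈ cycFix J i) {k : ℕ} (hk : k ≤ m) :
    cycOrbit J i x k ∈ cycFix J (i + k) := by
  rw [mem_cycFix_iff] at hx ⊢
  have hback : cycOrbit J (i + k) (cycOrbit J i x k) (m - k) = x := by
    rw [← cycOrbit_add, Nat.add_sub_cancel' hk, hx]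
  have hi : i + k + ((m - k : ℕ) : Fin m) = i := by
    rw [add_assoc, ← Nat.cast_add, Nat.add_sub_cancel' hk, Fin.natCast_self, add_zero]
  have hturn := cycOrbit_add (J := J) (i := i + k) (x := cycOrbit J i x k) (m - k) k
  rwa [Nat.sub_add_cancel hk, hback, hi] at hturn

theorem cycOrbit_eq_self_of_forall_apply_eq (hx : ∀ j, J j x = x) (k : ℕ) :
    cycOrbit J i x k = x := by
  induction k with
  | zero => rfl
  | succ k ih => rw [cycOrbit, ih, hx]

theorem forall_apply_eq_of_cycOrbit_eq_self (hx : ∀ k ≤ m, cycOrbit J i x k = x) (j : Fin m) :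
    J j x = x := by
  have hk := (j - (i + 1)).isLt
  have hj : i + 1 + (((j - (i + 1) : Fin m) : ℕ) : Fin m) = j := by
    rw [Fin.cast_val_eq_self]
    abel
  have h := hx _ hk
  rwa [cycOrbit, hx _ hk.le, hj] at h

end cycOrbit

section resolventOrbit

variable {A : Fin m → X → Set X} {J : Fin m → X → X} {i : Fin m} {x y : X}

theorem antitone_norm_cycOrbit_sub (hA : ∀ i, SVMonotone (A i))
    (hJ : ∀ i, IsResolventOf (J i) (A i)) (i : Fin m) (x y : X) :
    Antitone fun k => ‖cycOrbit J i y k - cycOrbit J i x k‖ :=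
  antitone_nat_of_succ_le fun _ => (hJ _).norm_sub_le (hA _) _ _

theorem cycOrbit_eq_add_sub (hA : ∀ i, SVMonotone (A i)) (hJ : ∀ i, IsResolventOf (J i) (A i))
    (hx : x ∈ cycFix J i) (hy : y ∈ cycFix J i) {k : ℕ} (hk : k ≤ m) :
    cycOrbit J i y k = cycOrbit J i x k + (y - x) := by
  rw [mem_cycFix_iff] at hx hy
  set d := fun k => cycOrbit J i y k - cycOrbit J i x k
  have hanti := antitone_norm_cycOrbit_sub hA hJ i x y
  have hnorm : ∀ k ≤ m, ‖d k‖ = ‖y - x‖ := fun k hk =>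
    le_antisymm (hanti k.zero_le) (by simpa [d, hx, hy] using hanti hk)
  refine eq_add_of_sub_eq' ?_
  induction k with
  | zero => rfl
  | succ k ih =>
    have hle : ‖d k‖ ≤ ‖d (k + 1)‖ := by rw [hnorm k (by omega), hnorm (k + 1) hk]
    rw [← ih (by omega)]
    exact (hJ _).sub_eq_of_norm_sub_le (hA _) hle

theorem cycFix_eq_iInter_of_nonempty (hA : ∀ i, SVMonotone (A i))
    (hJ : ∀ i, IsResolventOf (J i) (A i)) (h : (⋂ j : Fin m, {x : X | J j x = x}).Nonempty)
    (i : Fin m) : cycFix J i = ⋂ j : Fin m, {x : X | J j x = x} := by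
  obtain ⟨x, hx⟩ := h
  simp only [Set.mem_iInter, Set.mem_ofPred_eq] at hx
  have hxi : x ∈ cycFix J i := mem_cycFix_iff.mpr (cycOrbit_eq_self_of_forall_apply_eq hx m)
  ext p
  simp only [Set.mem_iInter, Set.mem_ofPred_eq]
  refine ⟨fun hp => forall_apply_eq_of_cycOrbit_eq_self (i := i) fun k hk => ?_,
    fun hp => mem_cycFix_iff.mpr (cycOrbit_eq_self_of_forall_apply_eq hp m)⟩
  rw [cycOrbit_eq_add_sub hA hJ hxi hp hk, cycOrbit_eq_self_of_forall_apply_eq hx]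
  abel

theorem add_smul_cycOrbit_sub_mem_cycFix (hA : ∀ i, SVMonotone (A i))
    (hJ : ∀ i, IsResolventOf (J i) (A i)) (hF : ∀ i j, cycFix J i = cycFix J j)
    (hx : x ∈ cycFix J i) {k : ℕ} (hk : k ≤ m) (t : ℕ) :
    x + (t : ℝ) • (cycOrbit J i x k - x) ∈ cycFix J i := by
  induction t with
  | zero => simpa using hx
  | succ t ih =>
    have h := cycOrbit_mem_cycFix ih hk
    rw [hF, cycOrbit_eq_add_sub hA hJ hx ih hk] at h
    convert h using 1
    push_cast
    module

theorem cycOrbit_eq_self_of_cycFix_eq (hA : ∀ i, SVMonotone (A i))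
    (hJ : ∀ i, IsResolventOf (J i) (A i)) (hfix : ∀ i : Fin m, {x : X | J i x = x}.Nonempty)
    (hF : ∀ i j, cycFix J i = cycFix J j) (hx : x ∈ cycFix J i) {k : ℕ} (hk : k ≤ m) :
    cycOrbit J i x k = x := by
  set z := cycOrbit J i x
  set g := z k - x
  have hray : ∀ (t : ℕ) {j : ℕ}, j ≤ m → cycOrbit J i (x + (t : ℝ) • g) j = z j + (t : ℝ) • g :=
    fun t j hj => by
      rw [cycOrbit_eq_add_sub hA hJ hx (add_smul_cycOrbit_sub_mem_cycFix hA hJ hF hx hk t) hj,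
        add_sub_cancel_left]
  have hstep : ∀ j < k, 0 ≤ ⟪g, z j - z (j + 1)⟫_ℝ := fun j hj => by
    obtain ⟨b, hb⟩ := hfix (i + 1 + j)
    refine (hJ _).inner_sub_nonneg_of_map_ray (hA _) hb fun t => ?_
    rw [← hray t (by omega), ← hray t (by omega : j + 1 ≤ m)]
    rfl
  have hsum : 0 ≤ ⟪g, x - z k⟫_ℝ := by
    rw [show x - z k = ∑ j ∈ Finset.range k, (z j - z (j + 1)) from
      (Finset.sum_range_sub' z k).symm, inner_sum]
    exact Finset.sum_nonneg fun j hj => hstep j (Finset.mem_range.mp hj)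
  rw [show x - z k = -g by simp [g], inner_neg_right, real_inner_self_eq_norm_sq] at hsum
  have hg : g = 0 := norm_eq_zero.mp (by nlinarith [norm_nonneg g])
  exact sub_eq_zero.mp hg

end resolventOrbit

/-- If each `Fix J_i ≠ ∅`, then `⋂ Fix J_i ≠ ∅` iff `F_1 = F_2 = ⋯ = F_m ≠ ∅`. -/
theorem iInter_fix_nonempty_iff_cycFix_all_equal
    (A : Fin m → X → Set X) (J : Fin m → X → X)
    (hA : ∀ i, SVMaxMonotone (A i)) (hJ : ∀ i, IsResolventOf (J i) (A i))
    (hfix : ∀ i : Fin m, {x : X | J i x = x}.Nonempty) :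
    (⋂ i : Fin m, {x : X | J i x = x}).Nonempty ↔
      (∀ i j : Fin m, cycFix J i = cycFix J j) ∧ (cycFix J 0).Nonempty := by
  have hmono : ∀ i, SVMonotone (A i) := fun i => (hA i).1
  constructor
  · intro h
    have hF := cycFix_eq_iInter_of_nonempty hmono hJ h
    exact ⟨fun i j => by rw [hF i, hF j], hF 0 ▸ h⟩
  · rintro ⟨hF, p, hp⟩
    exact ⟨p, Set.mem_iInter.mpr <| forall_apply_eq_of_cycOrbit_eq_self
      fun k hk => cycOrbit_eq_self_of_cycFix_eq hmono hJ hfix hF hp hk⟩
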